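/- arXiv:1604.07564 — 3 statements merged into one kernel-verified Lean document; each statement's English description precedes it below -/
import Mathlib

section
/- If a directed graph on vertex set V with a priority labeling Ω : V → ℕ admits a parity progress measure μ : V → Ordinal^r (for every edge (u,v), μ u ≽_{Ω u} μ v, with strict inequality ≻_{Ω u} when Ω u is odd), then along every infinite path in the graph the minimum priority occurring infinitely often is even. -/
/-- `x ≽_k y`: the first `k+1` components of `x` are lexicographically ≥ those of `y`. -/
def lexGe {r : ℕ} (k : Fin r) (x y : Fin r → Ordinal) : Prop :=
  (∀ j : Fin r, j ≤ k → x j = y j) ∨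
    ∃ i : Fin r, i ≤ k ∧ (∀ j : Fin r, j < i → x j = y j) ∧ y i < x i

/-- `x ≻_k y`: strict lexicographic inequality on the first `k+1` components. -/
def lexGt {r : ℕ} (k : Fin r) (x y : Fin r → Ordinal) : Prop :=
  ∃ i : Fin r, i ≤ k ∧ (∀ j : Fin r, j < i → x j = y j) ∧ y i < x i

/-- If a graph with priorities `Ω : V → Fin r` admits a parity progress
measure `μ : V → Ordinal^r`, then along every infinite path the minimum priority
occurring infinitely often is even. -/
theorem stmt5 {V : Type*} {r : ℕ} (E : V → V → Prop) (Ω : V → Fin r)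
    (μ : V → Fin r → Ordinal)
    (hpm : ∀ u v, E u v → lexGe (Ω u) (μ u) (μ v) ∧
      (Odd (Ω u : ℕ) → lexGt (Ω u) (μ u) (μ v)))
    (v : ℕ → V) (hpath : ∀ n, E (v n) (v (n + 1)))
    (m : Fin r) (hinf : {n : ℕ | Ω (v n) = m}.Infinite)
    (hleast : ∀ k : Fin r, k < m → {n : ℕ | Ω (v n) = k}.Finite) :
    Even (m : ℕ) := by
  by_contra hodd
  have hm : Odd (m : ℕ) := Nat.not_even_iff_odd.1 hodd
  -- the set of times with priority < m is finite
  have hfin : {n : ℕ | Ω (v n) < m}.Finite := by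
    have hsub : {n : ℕ | Ω (v n) < m} ⊆
        ⋃ k ∈ {k : Fin r | k < m}, {n : ℕ | Ω (v n) = k} := by
      intro n hn
      exact Set.mem_biUnion hn rfl
    exact (Set.Finite.biUnion (Set.toFinite _) fun k hk => hleast k hk).subset hsub
  obtain ⟨N, hN⟩ := hfin.bddAbove
  have hbig : ∀ n, N < n → m ≤ Ω (v n) := by
    intro n hn
    by_contra h
    exact absurd (hN (not_le.1 h)) (Nat.not_le.2 hn)
  -- truncation to the first m+1 coordinates, with the lexicographic order
  set T : (Fin r → Ordinal) → Lex (Fin r → Ordinal) :=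
    fun x => toLex (fun j => if j ≤ m then x j else 0) with hT
  -- one step: non-increasing after time N
  have hstep : ∀ n, N < n → T (μ (v (n + 1))) ≤ T (μ (v n)) := by
    intro n hn
    obtain ⟨hge, -⟩ := hpm (v n) (v (n + 1)) (hpath n)
    have hΩ : m ≤ Ω (v n) := hbig n hn
    rcases hge with heq | ⟨i, hi, hbelow, hlt⟩
    · refine le_of_eq ?_
      show toLex _ = toLex _
      congr 1
      funext j
      by_cases hj : j ≤ m
      · simp only [if_pos hj]
        exact (heq j (hj.trans hΩ)).symm
      · simp only [if_neg hj]
    · by_cases him : i ≤ m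
      · refine le_of_lt ?_
        refine ⟨i, fun j hj => ?_, ?_⟩
        · have hjm : j ≤ m := (le_of_lt hj).trans him
          simp only [hT, Pi.toLex_apply, if_pos hjm]
          exact (hbelow j hj).symm
        · simp only [hT, Pi.toLex_apply, if_pos him]
          exact hlt
      · refine le_of_eq ?_
        show toLex _ = toLex _
        congr 1
        funext j
        by_cases hj : j ≤ m
        · simp only [if_pos hj]
          exact (hbelow j (lt_of_le_of_lt hj (lt_of_not_ge him))).symm
        · simp only [if_neg hj]
  -- strict step at times with priority exactly m
  have hsstep : ∀ n, Ω (v n) = m → T (μ (v (n + 1))) < T (μ (v n)) := by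
    intro n hΩn
    obtain ⟨-, hstr⟩ := hpm (v n) (v (n + 1)) (hpath n)
    obtain ⟨i, hi, hbelow, hlt⟩ := hstr (hΩn ▸ hm)
    rw [hΩn] at hi
    refine ⟨i, fun j hj => ?_, ?_⟩
    · have hjm : j ≤ m := (le_of_lt hj).trans hi
      simp only [hT, Pi.toLex_apply, if_pos hjm]
      exact (hbelow j hj).symm
    · simp only [hT, Pi.toLex_apply, if_pos hi]
      exact hlt
  -- non-increasing over intervals
  have hchain : ∀ a b, N < a → a ≤ b → T (μ (v b)) ≤ T (μ (v a)) := by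
    intro a b ha hab
    induction b with
    | zero => omega
    | succ b ih =>
      rcases Nat.lt_or_ge a (b + 1) with h | h
      · have hab' : a ≤ b := Nat.lt_succ_iff.1 h
        exact (hstep b (lt_of_lt_of_le ha hab')).trans (ih hab')
      · have : a = b + 1 := le_antisymm hab h
        rw [this]
  -- the set of truncated measure values after time N
  have hwf : WellFounded ((· < ·) : Lex (Fin r → Ordinal) → Lex (Fin r → Ordinal) → Prop) :=
    IsWellFounded.wf
  set S : Set (Lex (Fin r → Ordinal)) := (fun n => T (μ (v n))) '' {n : ℕ | N < n} with hS
  have hSne : S.Nonempty := ⟨T (μ (v (N + 1))), ⟨N + 1, Nat.lt_succ_self N, rfl⟩⟩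
  obtain ⟨x, ⟨n₁, hn₁, rfl⟩, hmin⟩ := hwf.has_min S hSne
  obtain ⟨n₂, hn₂, hn₁₂⟩ := hinf.exists_gt n₁
  have hlt1 : T (μ (v (n₂ + 1))) < T (μ (v n₂)) := hsstep n₂ hn₂
  have hle : T (μ (v n₂)) ≤ T (μ (v n₁)) := hchain n₁ n₂ hn₁ (le_of_lt hn₁₂)
  have hmem : T (μ (v (n₂ + 1))) ∈ S :=
    ⟨n₂ + 1, lt_trans hn₁ (Nat.lt_succ_of_lt hn₁₂), rfl⟩
  exact hmin _ hmem (lt_of_lt_of_le hlt1 hle)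
end

section
/- Converse direction of the progress-measure theorem for finite graphs: if a finite directed graph with priority labeling Ω : V → Fin r satisfies the parity condition on every infinite path (least priority seen infinitely often is even), then there exists a parity progress measure μ : V → ℕ^r (tuples of naturals suffice) such that for every edge (u,v), μ u ≥_{Ω u} μ v lexicographically on the first Ω u + 1 components, strictly when Ω u is odd. -/
/-- `x ≥_k y` for tuples of naturals: lexicographic comparison on components `0..k`. -/
def natLexGe {r : ℕ} (k : Fin r) (x y : Fin r → ℕ) : Prop :=
  (∀ j : Fin r, j ≤ k → x j = y j) ∨
    ∃ i : Fin r, i ≤ k ∧ (∀ j : Fin r, j < i → x j = y j) ∧ y i < x i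

/-- `x >_k y`: strict lexicographic inequality on components `0..k`. -/
def natLexGt {r : ℕ} (k : Fin r) (x y : Fin r → ℕ) : Prop :=
  ∃ i : Fin r, i ≤ k ∧ (∀ j : Fin r, j < i → x j = y j) ∧ y i < x i

theorem natLexGt_of_pointwise {r : ℕ} (k : Fin r) (x y : Fin r → ℕ)
    (h : ∀ j : Fin r, j ≤ k → y j ≤ x j) (hs : ∃ i : Fin r, i ≤ k ∧ y i < x i) :
    natLexGt k x y := by
  classical
  obtain ⟨i0, hi0k, hi0⟩ := hs
  have hex : ∃ n : ℕ, ∃ hn : n < r, (⟨n, hn⟩ : Fin r) ≤ k ∧ y ⟨n, hn⟩ < x ⟨n, hn⟩ :=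
    ⟨i0, i0.isLt, by simpa using hi0k, by simpa using hi0⟩
  obtain ⟨hn, hnk, hns⟩ := Nat.find_spec hex
  refine ⟨⟨Nat.find hex, hn⟩, hnk, ?_, hns⟩
  intro j hj
  have hjk : j ≤ k := le_trans (le_of_lt hj) hnk
  have hyx := h j hjk
  rcases lt_or_eq_of_le hyx with hlt | heq
  · exact absurd ⟨j.isLt, by simpa using hjk, by simpa using hlt⟩ (Nat.find_min hex hj)
  · exact heq.symm

theorem natLexGe_of_pointwise {r : ℕ} (k : Fin r) (x y : Fin r → ℕ)
    (h : ∀ j : Fin r, j ≤ k → y j ≤ x j) : natLexGe k x y := by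
  by_cases he : ∀ j : Fin r, j ≤ k → x j = y j
  · exact Or.inl he
  · push_neg at he
    obtain ⟨j, hjk, hj⟩ := he
    exact Or.inr (natLexGt_of_pointwise k x y h
      ⟨j, hjk, (h j hjk).lt_of_ne (fun e => hj e.symm)⟩)

theorem transGen_path {α : Type*} {rE : α → α → Prop} {a b : α}
    (h : Relation.TransGen rE a b) :
    ∃ (n : ℕ) (f : ℕ → α), 0 < n ∧ f 0 = a ∧ f n = b ∧ ∀ m < n, rE (f m) (f (m + 1)) := by
  induction h with
  | @single c hab =>
    refine ⟨1, fun m => if m = 0 then a else c, one_pos, by simp, by simp, ?_⟩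
    intro m hm
    interval_cases m
    simpa using hab
  | @tail p c hab hbc ih =>
    obtain ⟨n, f, hn, hf0, hfn, hstep⟩ := ih
    refine ⟨n + 1, fun m => if m ≤ n then f m else c, by omega,
      by simpa using hf0, by simp, ?_⟩
    intro m hm
    rcases lt_or_eq_of_le (Nat.lt_succ_iff.mp hm) with hlt | heq
    · simp only [if_pos hlt.le, if_pos (Nat.succ_le_of_lt hlt)]
      exact hstep m hlt
    · subst heq
      simp only [le_refl, if_pos, if_neg (by omega : ¬ m + 1 ≤ m)]
      rw [hfn]
      exact hbc

/-- If a finite graph with priorities `Ω : V → Fin r` satisfies the parity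
condition on every infinite path (least priority seen infinitely often is even), then
it admits a parity progress measure `μ : V → ℕ^r`. -/
theorem stmt6 {V : Type*} [Finite V] {r : ℕ} (E : V → V → Prop) (Ω : V → Fin r)
    (hparity : ∀ v : ℕ → V, (∀ n, E (v n) (v (n + 1))) →
      ∀ m : Fin r, {n : ℕ | Ω (v n) = m}.Infinite →
        (∀ k : Fin r, k < m → {n : ℕ | Ω (v n) = k}.Finite) → Even (m : ℕ)) :
    ∃ μ : V → Fin r → ℕ, ∀ u v, E u v →
      natLexGe (Ω u) (μ u) (μ v) ∧ (Odd (Ω u : ℕ) → natLexGt (Ω u) (μ u) (μ v)) := by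
  classical
  set Ei : Fin r → V → V → Prop := fun i a b => E a b ∧ i ≤ Ω a ∧ i ≤ Ω b with hEi
  -- no cycle through a vertex of odd priority staying in priorities ≥ that priority
  have hnoc : ∀ i : Fin r, Odd (i : ℕ) → ∀ u : V, Ω u = i →
      ¬ Relation.TransGen (Ei i) u u := by
    intro i hi u hu hcyc
    obtain ⟨n, f, hn, hf0, hfn, hstep⟩ := transGen_path hcyc
    set v : ℕ → V := fun m => f (m % n) with hv
    have hge : ∀ m : ℕ, i ≤ Ω (v m) := by
      intro m
      exact (hstep (m % n) (Nat.mod_lt _ hn)).2.1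
    have hedge : ∀ m, E (v m) (v (m + 1)) := by
      intro m
      have hmod : (m + 1) % n = (m % n + 1) % n := (Nat.mod_add_mod m n 1).symm
      have hq : m % n < n := Nat.mod_lt _ hn
      rcases lt_or_eq_of_le (Nat.succ_le_of_lt hq) with hlt | heq
      · show E (f (m % n)) (f ((m + 1) % n))
        rw [hmod, Nat.mod_eq_of_lt hlt]
        exact (hstep _ hq).1
      · have heq' : m % n + 1 = n := by omega
        have h1 : (m + 1) % n = 0 := by rw [hmod, heq', Nat.mod_self]
        have h2 : f (m % n + 1) = f 0 := by rw [heq', hfn, hf0]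
        show E (f (m % n)) (f ((m + 1) % n))
        rw [h1, ← h2]
        exact (hstep _ hq).1
    have hinf : {m : ℕ | Ω (v m) = i}.Infinite := by
      refine Set.infinite_of_injective_forall_mem
        (f := fun k : ℕ => k * n) (fun a b hab => Nat.eq_of_mul_eq_mul_right hn hab) ?_
      intro a
      show Ω (v (a * n)) = i
      simp only [hv, Nat.mul_mod_left, hf0, hu]
    have hfin : ∀ k : Fin r, k < i → {m : ℕ | Ω (v m) = k}.Finite := by
      intro k hk
      convert Set.finite_empty
      ext m
      simp only [Set.mem_setOf_eq, Set.mem_empty_iff_false, iff_false]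
      intro hm
      exact absurd (hm ▸ hge m) (not_le.mpr hk)
    have := hparity v hedge i hinf hfin
    exact (Nat.not_even_iff_odd.mpr hi) this
  -- define the progress measure
  set S : Fin r → V → Set V :=
    fun i v => {w | Ω w = i ∧ i ≤ Ω v ∧ Relation.ReflTransGen (Ei i) v w} with hS
  set μ : V → Fin r → ℕ := fun v i => if Odd (i : ℕ) then (S i v).ncard else 0 with hμ
  refine ⟨μ, ?_⟩
  intro u v huv
  have hsub : ∀ i : Fin r, i ≤ Ω u → S i v ⊆ S i u := by
    intro i hik w hw
    obtain ⟨hwi, hiv, hrtg⟩ := hw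
    exact ⟨hwi, hik, Relation.ReflTransGen.head ⟨huv, hik, hiv⟩ hrtg⟩
  have hmono : ∀ i : Fin r, i ≤ Ω u → μ v i ≤ μ u i := by
    intro i hik
    by_cases hodd : Odd (i : ℕ)
    · simp only [hμ, if_pos hodd]
      exact Set.ncard_le_ncard (hsub i hik) (Set.toFinite _)
    · simp [hμ, hodd]
  constructor
  · exact natLexGe_of_pointwise _ _ _ hmono
  · intro hodd
    have humem : u ∈ S (Ω u) u := ⟨rfl, le_refl _, Relation.ReflTransGen.refl⟩
    have hunotv : u ∉ S (Ω u) v := by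
      rintro ⟨-, hkv, hrtg⟩
      exact hnoc (Ω u) hodd u rfl (Relation.TransGen.head' ⟨huv, le_refl _, hkv⟩ hrtg)
    have hss : S (Ω u) v ⊂ S (Ω u) u :=
      (Set.ssubset_iff_of_subset (hsub _ le_rfl)).mpr ⟨u, humem, hunotv⟩
    have hlt : (S (Ω u) v).ncard < (S (Ω u) u).ncard :=
      Set.ncard_lt_ncard hss (Set.toFinite _)
    refine natLexGt_of_pointwise _ _ _ hmono ⟨Ω u, le_rfl, ?_⟩
    simpa only [hμ, if_pos hodd] using hlt
end

section
/- If every play of an infinite tree labeled by priorities admits a ranking into ordinals that weakly decreases at even priorities and strictly decreases at odd priorities (with respect to the truncated lexicographic orders), then every infinite branch satisfies the parity condition. -/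
section Aux

variable {r : ℕ}

/-- Truncate a vector at index `m`, zeroing out later components, viewed lexicographically. -/
noncomputable def trunc (m : Fin r) (x : Fin r → Ordinal) : Lex (Fin r → Ordinal) :=
  toLex (fun j => if j ≤ m then x j else 0)

lemma trunc_lt_of_lexGt (m : Fin r) {x y : Fin r → Ordinal} (h : lexGt m x y) :
    trunc m y < trunc m x := by
  obtain ⟨i, him, heq, hlt⟩ := h
  refine ⟨i, fun j hj => ?_, ?_⟩
  · simp only [trunc, Pi.toLex_apply]
    rw [if_pos (le_trans (le_of_lt hj) him), if_pos (le_trans (le_of_lt hj) him)]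
    exact (heq j hj).symm
  · simp only [trunc, Pi.toLex_apply]
    rw [if_pos him, if_pos him]
    exact hlt

lemma trunc_le_of_lexGe (m : Fin r) {x y : Fin r → Ordinal} (h : lexGe m x y) :
    trunc m y ≤ trunc m x := by
  rcases h with heq | hlt
  · refine le_of_eq ?_
    simp only [trunc]
    congr 1
    funext j
    by_cases hj : j ≤ m
    · rw [if_pos hj, if_pos hj, heq j hj]
    · rw [if_neg hj, if_neg hj]
  · exact (trunc_lt_of_lexGt m hlt).le

lemma lexGe_mono {k m : Fin r} (hmk : m ≤ k) {x y : Fin r → Ordinal}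
    (h : lexGe k x y) : lexGe m x y := by
  rcases h with heq | ⟨i, hik, heq, hlt⟩
  · exact Or.inl fun j hj => heq j (le_trans hj hmk)
  · by_cases him : i ≤ m
    · exact Or.inr ⟨i, him, heq, hlt⟩
    · exact Or.inl fun j hj => heq j (lt_of_le_of_lt hj (not_le.1 him))

end Aux

/-- If a tree `T ⊆ D^*` with priorities `Ω` admits a ranking
`μ : T → Ordinal^r` that weakly decreases along edges at even priorities and strictly
decreases at odd priorities, then every infinite branch satisfies the parity
condition: the least priority occurring infinitely often is even. -/
theorem stmt18 {D : Type*} {r : ℕ} (T : Set (List D))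
    (hprefix : ∀ t ∈ T, ∀ d : D, ∀ s : List D, t ++ [d] ++ s ∈ T → t ++ [d] ∈ T)
    (hchild : ∀ t ∈ T, ∃ d : D, t ++ [d] ∈ T)
    (Ω : List D → Fin r) (μ : List D → Fin r → Ordinal)
    (hdec : ∀ t ∈ T, ∀ d : D, t ++ [d] ∈ T →
      lexGe (Ω t) (μ t) (μ (t ++ [d])) ∧
      (Odd (Ω t : ℕ) → lexGt (Ω t) (μ t) (μ (t ++ [d]))))
    (b : ℕ → List D) (hb : ∀ n, b n ∈ T) (hstep : ∀ n, ∃ d : D, b (n + 1) = b n ++ [d])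
    (m : Fin r) (hinf : {n : ℕ | Ω (b n) = m}.Infinite)
    (hleast : ∀ k : Fin r, k < m → {n : ℕ | Ω (b n) = k}.Finite) :
    Even (m : ℕ) := by
  rcases Nat.even_or_odd (m : ℕ) with he | ho
  · exact he
  exfalso
  -- only finitely many positions have priority below `m`
  have hfin : {n : ℕ | Ω (b n) < m}.Finite := by
    have hsub : {n : ℕ | Ω (b n) < m} ⊆ ⋃ k ∈ {k : Fin r | k < m}, {n : ℕ | Ω (b n) = k} := by
      intro n hn
      exact Set.mem_biUnion hn rfl
    exact (Set.Finite.biUnion (Set.toFinite _) (fun k hk => hleast k hk)).subset hsub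
  obtain ⟨N, hN⟩ : ∃ N : ℕ, ∀ n, N ≤ n → m ≤ Ω (b n) := by
    rcases hfin.bddAbove with ⟨M, hM⟩
    refine ⟨M + 1, fun n hn => not_lt.1 fun h => ?_⟩
    have := hM h
    omega
  -- the step conditions along the branch
  have hstep' : ∀ n : ℕ, lexGe (Ω (b n)) (μ (b n)) (μ (b (n + 1))) ∧
      (Odd ((Ω (b n)) : ℕ) → lexGt (Ω (b n)) (μ (b n)) (μ (b (n + 1)))) := by
    intro n
    obtain ⟨d, hd⟩ := hstep n
    have h1 : b n ++ [d] ∈ T := hd ▸ hb (n + 1)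
    have := hdec (b n) (hb n) d h1
    rw [hd]
    exact this
  set g : ℕ → Lex (Fin r → Ordinal) := fun n => trunc m (μ (b n)) with hg
  have hle : ∀ n, N ≤ n → g (n + 1) ≤ g n := fun n hn =>
    trunc_le_of_lexGe m (lexGe_mono (hN n hn) (hstep' n).1)
  have hmono : ∀ p q : ℕ, N ≤ p → p ≤ q → g q ≤ g p := by
    intro p q hp hpq
    induction q, hpq using Nat.le_induction with
    | base => exact le_rfl
    | succ q hpq ih => exact le_trans (hle q (le_trans hp hpq)) ih
  -- take a minimal value of `g` on `[N, ∞)`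
  obtain ⟨a, ⟨M, hM1, rfl⟩, hmin⟩ :=
    (IsWellFounded.wf (α := Lex (Fin r → Ordinal)) (r := (· < ·))).has_min
      (g '' Set.Ici N) ⟨g N, N, Set.self_mem_Ici, rfl⟩
  -- find a strict-decrease position after `M`
  obtain ⟨n, hnmem, hMn⟩ := hinf.exists_gt M
  have hΩ : Ω (b n) = m := hnmem
  have hstrict : lexGt m (μ (b n)) (μ (b (n + 1))) := by
    have := (hstep' n).2
    rw [hΩ] at this
    exact this ho
  have h1 : g (n + 1) < g n := trunc_lt_of_lexGt m hstrict
  have h2 : g n ≤ g M := hmono M n hM1 hMn.le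
  have h3 : g (n + 1) ∈ g '' Set.Ici N := ⟨n + 1, Set.mem_Ici.mpr (le_trans (Set.mem_Ici.mp hM1) (by omega)), rfl⟩
  exact hmin _ h3 (lt_of_lt_of_le h1 h2)
end
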